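/- If an L-formula φ is falsifiable (respectively, satisfiable) on some GS4 frame, then φ is falsifiable (respectively, satisfiable) on some GS4 frame whose set of worlds is finite. That is, the logic GS4 has the finite birelational frame property. -/

import Mathlib

universe u

/-- Formulas of the intuitionistic modal language `L`, with a countably infinite
set of propositional variables indexed by `ℕ`. -/
inductive Fml : Type where
  | var : ℕ → Fml
  | bot : Fml
  | and : Fml → Fml → Fml
  | or : Fml → Fml → Fml
  | imp : Fml → Fml → Fml
  | dia : Fml → Fml
  | box : Fml → Fml
  deriving DecidableEq

/-- A birelational structure: a set of worlds, a set of fallible worlds, an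
intuitionistic relation `le` (`≼`), a modal relation `sq` (`⊑`) and a valuation. -/
structure KModel : Type (u + 1) where
  W : Type u
  fallible : Set W
  le : W → W → Prop
  sq : W → W → Prop
  val : ℕ → Set W

namespace KModel

/-- The satisfaction relation. -/
def Sat (M : KModel.{u}) : Fml → M.W → Prop
  | .var p, w => w ∈ M.val p
  | .bot, w => w ∈ M.fallible
  | .and φ ψ, w => Sat M φ w ∧ Sat M ψ w
  | .or φ ψ, w => Sat M φ w ∨ Sat M ψ w
  | .imp φ ψ, w => ∀ v, M.le w v → Sat M φ v → Sat M ψ v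
  | .dia φ, w => ∀ u, M.le w u → ∃ v, M.sq u v ∧ Sat M φ v
  | .box φ, w => ∀ u v, M.le w u → M.sq u v → Sat M φ v

/-- `M` is a bi-intuitionistic model: both relations are preorders, the set of
fallible worlds is closed under both relations, and the valuation is
`≼`-monotone and contains the fallible worlds. -/
def IsBiInt (M : KModel.{u}) : Prop :=
  (∀ w, M.le w w) ∧ (∀ u v w, M.le u v → M.le v w → M.le u w) ∧
  (∀ w, M.sq w w) ∧ (∀ u v w, M.sq u v → M.sq v w → M.sq u w) ∧
  (∀ w v, w ∈ M.fallible → M.le w v → v ∈ M.fallible) ∧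
  (∀ w v, w ∈ M.fallible → M.sq w v → v ∈ M.fallible) ∧
  (∀ p w v, w ∈ M.val p → M.le w v → v ∈ M.val p) ∧
  (∀ p w, w ∈ M.fallible → w ∈ M.val p)

/-- `⊑` is forth–up confluent for `≼`. -/
def ForthUp (M : KModel.{u}) : Prop :=
  ∀ w w' v, M.le w w' → M.sq w v → ∃ v', M.le v v' ∧ M.sq w' v'

/-- `⊑` is back–up confluent for `≼`. -/
def BackUp (M : KModel.{u}) : Prop :=
  ∀ w v v', M.sq w v → M.le v v' → ∃ w', M.le w w' ∧ M.sq w' v'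

/-- `⊑` is forth–down confluent for `≼`. -/
def ForthDown (M : KModel.{u}) : Prop :=
  ∀ w v v', M.le w v → M.sq v v' → ∃ w', M.sq w w' ∧ M.le w' v'

/-- `≼` is upward linear. -/
def UpLinear (M : KModel.{u}) : Prop :=
  ∀ w u v, M.le w u → M.le w v → M.le u v ∨ M.le v u

/-- There are no fallible worlds. -/
def Infallible (M : KModel.{u}) : Prop := M.fallible = ∅

/-- CS4 frames: back–up confluent bi-intuitionistic frames. -/
def IsCS4 (M : KModel.{u}) : Prop := M.IsBiInt ∧ M.BackUp

/-- IS4 frames: forth–up confluent infallible CS4 frames. -/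
def IsIS4 (M : KModel.{u}) : Prop := M.IsCS4 ∧ M.ForthUp ∧ M.Infallible

/-- GS4 frames: upward-linear IS4 frames. -/
def IsGS4 (M : KModel.{u}) : Prop := M.IsIS4 ∧ M.UpLinear

/-- GS4c frames: forth–down confluent GS4 frames. -/
def IsGS4c (M : KModel.{u}) : Prop := M.IsGS4 ∧ M.ForthDown

/-- S4I frames: forth–up and forth–down confluent infallible bi-intuitionistic frames. -/
def IsS4I (M : KModel.{u}) : Prop :=
  M.IsBiInt ∧ M.ForthUp ∧ M.ForthDown ∧ M.Infallible

end KModel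

/-!
Filtrate through the subformulas of `φ`. Identifying worlds with equal types would break upward
linearity (incomparable branches may carry incomparable types), so a world of the finite model is
instead the set of types realised in the `≼`-cone of a world of `M`, which upward linearity makes a
chain. Such sets are ordered by "upper subset" and related by the reflexive-transitive closure of
the image of `⊑`. Upward linearity again shows that the worlds above the image of `u` are exactly
the images of the worlds above `u`; this yields the confluence conditions and the cases `→`, `◇`,
`□` of the truth lemma, since `□`-formulas are preserved and `◇`-formulas reflected by `⊑`.
-/

namespace Fml

def subformulas : Fml → Finset Fml
  | var p => {var p}
  | bot => {bot}
  | and a b => insert (and a b) (subformulas a ∪ subformulas b)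
  | or a b => insert (or a b) (subformulas a ∪ subformulas b)
  | imp a b => insert (imp a b) (subformulas a ∪ subformulas b)
  | dia a => insert (dia a) (subformulas a)
  | box a => insert (box a) (subformulas a)

theorem mem_subformulas_self (φ : Fml) : φ ∈ φ.subformulas := by
  cases φ <;> simp [subformulas]

end Fml

def IsUpperSubset {α : Type*} [LE α] (D C : Set α) : Prop :=
  D ⊆ C ∧ ∀ s ∈ C, ∀ t ∈ D, t ≤ s → s ∈ D

namespace IsUpperSubset

variable {α : Type*} [LE α] {C D E : Set α}

theorem refl (C : Set α) : IsUpperSubset C C :=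
  ⟨subset_rfl, fun _ hs _ _ _ => hs⟩

theorem trans (hED : IsUpperSubset E D) (hDC : IsUpperSubset D C) : IsUpperSubset E C :=
  ⟨hED.1.trans hDC.1, fun s hs t ht hts => hED.2 s (hDC.2 s hs t (hED.1 ht) hts) t ht hts⟩

theorem eq_sep_of_isLeast (h : IsUpperSubset D C) {m : α} (hm : IsLeast D m) :
    D = {s ∈ C | m ≤ s} :=
  Set.Subset.antisymm (fun _ hs => ⟨h.1 hs, hm.2 hs⟩)
    (fun s hs => h.2 s hs.1 m hm.1 hs.2)

end IsUpperSubset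

theorem isUpperSubset_sep {α : Type*} [Preorder α] (C : Set α) (m : α) :
    IsUpperSubset {s ∈ C | m ≤ s} C :=
  ⟨Set.sep_subset C _, fun _ hs _ ht hts => ⟨hs, ht.2.trans hts⟩⟩

namespace Relation

variable {α : Type*} {le r : α → α → Prop}

theorem ReflTransGen.exists_of_backUp
    (h : ∀ w v v', r w v → le v v' → ∃ w', le w w' ∧ r w' v') {w v v' : α}
    (hwv : ReflTransGen r w v) (hvv' : le v v') : ∃ w', le w w' ∧ ReflTransGen r w' v' := by
  induction hwv generalizing v' with
  | refl => exact ⟨v', hvv', .refl⟩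
  | tail _ hbv ih =>
    obtain ⟨b', hbb', hb'v'⟩ := h _ _ _ hbv hvv'
    obtain ⟨w', hww', hw'b'⟩ := ih hbb'
    exact ⟨w', hww', hw'b'.tail hb'v'⟩

theorem ReflTransGen.exists_of_forthUp
    (h : ∀ w w' v, le w w' → r w v → ∃ v', le v v' ∧ r w' v') {w w' v : α}
    (hww' : le w w') (hwv : ReflTransGen r w v) : ∃ v', le v v' ∧ ReflTransGen r w' v' := by
  induction hwv with
  | refl => exact ⟨w', hww', .refl⟩
  | tail _ hbv ih =>
    obtain ⟨b', hbb', hw'b'⟩ := ih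
    obtain ⟨v', hvv', hb'v'⟩ := h _ _ _ hbb' hbv
    exact ⟨v', hvv', hw'b'.tail hb'v'⟩

end Relation

namespace KModel

variable {M : KModel.{u}}

theorem IsBiInt.le_refl (hM : M.IsBiInt) (w : M.W) : M.le w w := hM.1 w
theorem IsBiInt.le_trans (hM : M.IsBiInt) {u v w : M.W} (huv : M.le u v) (hvw : M.le v w) :
    M.le u w := hM.2.1 u v w huv hvw
theorem IsBiInt.sq_refl (hM : M.IsBiInt) (w : M.W) : M.sq w w := hM.2.2.1 w
theorem IsBiInt.sq_trans (hM : M.IsBiInt) {u v w : M.W} (huv : M.sq u v) (hvw : M.sq v w) :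
    M.sq u w := hM.2.2.2.1 u v w huv hvw

theorem IsGS4.isBiInt (hM : M.IsGS4) : M.IsBiInt := hM.1.1.1
theorem IsGS4.backUp (hM : M.IsGS4) : M.BackUp := hM.1.1.2
theorem IsGS4.forthUp (hM : M.IsGS4) : M.ForthUp := hM.1.2.1
theorem IsGS4.infallible (hM : M.IsGS4) : M.Infallible := hM.1.2.2
theorem IsGS4.upLinear (hM : M.IsGS4) : M.UpLinear := hM.2

theorem IsBiInt.sat_mono (hM : M.IsBiInt) (ψ : Fml) {u v : M.W} (huv : M.le u v)
    (h : M.Sat ψ u) : M.Sat ψ v := by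
  obtain ⟨-, hle_trans, -, -, hfallible_le, -, hval_le, -⟩ := hM
  induction ψ with
  | var p => exact hval_le p u v h huv
  | bot => exact hfallible_le u v h huv
  | and a b iha ihb => exact ⟨iha h.1, ihb h.2⟩
  | or a b iha ihb => exact h.imp iha ihb
  | imp a b => exact fun x hvx => h x (hle_trans u v x huv hvx)
  | dia a => exact fun x hvx => h x (hle_trans u v x huv hvx)
  | box a => exact fun x y hvx => h x y (hle_trans u v x huv hvx)

theorem IsBiInt.sat_of_sat_box (hM : M.IsBiInt) {ψ : Fml} {w : M.W}
    (h : M.Sat (.box ψ) w) : M.Sat ψ w :=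
  h w w (hM.le_refl w) (hM.sq_refl w)

theorem IsBiInt.sat_dia_of_sat (hM : M.IsBiInt) {ψ : Fml} {w : M.W} (h : M.Sat ψ w) :
    M.Sat (.dia ψ) w :=
  fun x hwx => ⟨x, hM.sq_refl x, hM.sat_mono ψ hwx h⟩

theorem sat_box_of_sq (hM : M.IsBiInt) (hback : M.BackUp) {ψ : Fml} {w v : M.W}
    (hwv : M.sq w v) (h : M.Sat (.box ψ) w) : M.Sat (.box ψ) v := by
  intro x y hvx hxy
  obtain ⟨w', hww', hw'x⟩ := hback w v x hwv hvx
  exact h w' y hww' (hM.sq_trans hw'x hxy)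

theorem sat_dia_of_sq (hM : M.IsBiInt) (hforth : M.ForthUp) {ψ : Fml} {w v : M.W}
    (hwv : M.sq w v) (h : M.Sat (.dia ψ) v) : M.Sat (.dia ψ) w := by
  intro x hwx
  obtain ⟨v', hvv', hxv'⟩ := hforth w x v hwx hwv
  obtain ⟨y, hv'y, hy⟩ := hM.sat_mono _ hvv' h v' (hM.le_refl v')
  exact ⟨y, hM.sq_trans hxv' hv'y, hy⟩

section Filtration

variable (M) (Γ : Finset Fml)

def type (u : M.W) : Set Fml := {ψ | ψ ∈ Γ ∧ M.Sat ψ u}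

def coneTypes (u : M.W) : Set (Set Fml) := M.type Γ '' {v | M.le u v}

def filtration : KModel.{0} where
  W := Set.range (M.coneTypes Γ)
  fallible := ∅
  le C D := IsUpperSubset D.1 C.1
  sq := Relation.ReflTransGen
    (Relation.Map M.sq (Set.rangeFactorization (M.coneTypes Γ))
      (Set.rangeFactorization (M.coneTypes Γ)))
  val p := {C | .var p ∈ ⋂₀ C.1}

def toFiltration : M.W → (M.filtration Γ).W := Set.rangeFactorization (M.coneTypes Γ)

variable {M Γ}

theorem toFiltration_surjective : (M.toFiltration Γ).Surjective :=
  Set.rangeFactorization_surjective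

theorem type_mono (hM : M.IsBiInt) {u v : M.W} (huv : M.le u v) : M.type Γ u ⊆ M.type Γ v :=
  fun ψ hψ => ⟨hψ.1, hM.sat_mono ψ huv hψ.2⟩

theorem isLeast_type_coneTypes (hM : M.IsBiInt) (u : M.W) :
    IsLeast (M.coneTypes Γ u) (M.type Γ u) :=
  ⟨⟨u, hM.le_refl u, rfl⟩, by rintro _ ⟨v, huv, rfl⟩; exact type_mono hM huv⟩

theorem sInter_toFiltration (hM : M.IsBiInt) (u : M.W) :
    ⋂₀ (M.toFiltration Γ u).1 = M.type Γ u := by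
  rw [← Set.sInf_eq_sInter]
  exact (isLeast_type_coneTypes hM u).csInf_eq

theorem coneTypes_eq_sep (hM : M.IsBiInt) (hlin : M.UpLinear) {u v : M.W} (huv : M.le u v) :
    M.coneTypes Γ v = {s ∈ M.coneTypes Γ u | M.type Γ v ≤ s} := by
  refine Set.Subset.antisymm (fun s hs => ⟨?_, (isLeast_type_coneTypes hM v).2 hs⟩) ?_
  · obtain ⟨c, hvc, rfl⟩ := hs
    exact ⟨c, hM.le_trans huv hvc, rfl⟩
  · rintro _ ⟨⟨c, huc, rfl⟩, hvc⟩
    rcases hlin u v c huv huc with hvc' | hcv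
    · exact ⟨c, hvc', rfl⟩
    · exact ⟨v, hM.le_refl v, hvc.antisymm (type_mono hM hcv)⟩

theorem le_toFiltration_iff (hM : M.IsBiInt) (hlin : M.UpLinear) {u : M.W}
    {D : (M.filtration Γ).W} :
    (M.filtration Γ).le (M.toFiltration Γ u) D ↔ ∃ v, M.le u v ∧ M.toFiltration Γ v = D := by
  constructor
  · obtain ⟨w, rfl⟩ := toFiltration_surjective D
    intro (hle : IsUpperSubset (M.coneTypes Γ w) (M.coneTypes Γ u))
    obtain ⟨v, huv, hvw⟩ := hle.1 (isLeast_type_coneTypes hM w).1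
    refine ⟨v, huv, Subtype.ext ?_⟩
    change M.coneTypes Γ v = M.coneTypes Γ w
    rw [hle.eq_sep_of_isLeast (isLeast_type_coneTypes hM w), coneTypes_eq_sep hM hlin huv, hvw]
  · rintro ⟨v, huv, rfl⟩
    change IsUpperSubset (M.coneTypes Γ v) (M.coneTypes Γ u)
    rw [coneTypes_eq_sep hM hlin huv]
    exact isUpperSubset_sep _ _

theorem filtration_backUp (hM : M.IsBiInt) (hlin : M.UpLinear) (hback : M.BackUp) :
    (M.filtration Γ).BackUp := by
  refine fun C D D' hCD hDD' => hCD.exists_of_backUp ?_ hDD'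
  rintro _ _ D' ⟨w, v, hwv, rfl, rfl⟩ hvD'
  obtain ⟨v', hvv', rfl⟩ := (le_toFiltration_iff hM hlin).1 hvD'
  obtain ⟨w', hww', hw'v'⟩ := hback w v v' hwv hvv'
  exact ⟨_, (le_toFiltration_iff hM hlin).2 ⟨w', hww', rfl⟩, w', v', hw'v', rfl, rfl⟩

theorem filtration_forthUp (hM : M.IsBiInt) (hlin : M.UpLinear) (hforth : M.ForthUp) :
    (M.filtration Γ).ForthUp := by
  refine fun C C' D hCC' hCD => Relation.ReflTransGen.exists_of_forthUp ?_ hCC' hCD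
  rintro _ C' _ hwC' ⟨w, v, hwv, rfl, rfl⟩
  obtain ⟨w', hww', rfl⟩ := (le_toFiltration_iff hM hlin).1 hwC'
  obtain ⟨v', hvv', hw'v'⟩ := hforth w w' v hww' hwv
  exact ⟨_, (le_toFiltration_iff hM hlin).2 ⟨v', hvv', rfl⟩, w', v', hw'v', rfl, rfl⟩

theorem filtration_upLinear (hM : M.IsBiInt) (hlin : M.UpLinear) :
    (M.filtration Γ).UpLinear := by
  intro C D E hCD hCE
  obtain ⟨u, rfl⟩ := toFiltration_surjective C
  obtain ⟨a, hua, rfl⟩ := (le_toFiltration_iff hM hlin).1 hCD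
  obtain ⟨b, hub, rfl⟩ := (le_toFiltration_iff hM hlin).1 hCE
  exact (hlin u a b hua hub).imp (fun hab => (le_toFiltration_iff hM hlin).2 ⟨b, hab, rfl⟩)
    (fun hba => (le_toFiltration_iff hM hlin).2 ⟨a, hba, rfl⟩)

theorem isBiInt_filtration : (M.filtration Γ).IsBiInt :=
  ⟨fun C => IsUpperSubset.refl C.1, fun _ _ _ hCD hDE => hDE.trans hCD, fun _ => .refl,
    fun _ _ _ => .trans, fun _ _ h => h.elim, fun _ _ h => h.elim,
    fun _ _ _ hC hCD => Set.sInter_subset_sInter hCD.1 hC, fun _ _ h => h.elim⟩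

theorem isGS4_filtration (hM : M.IsGS4) : (M.filtration Γ).IsGS4 :=
  ⟨⟨⟨isBiInt_filtration, filtration_backUp hM.isBiInt hM.upLinear hM.backUp⟩,
    filtration_forthUp hM.isBiInt hM.upLinear hM.forthUp, rfl⟩,
    filtration_upLinear hM.isBiInt hM.upLinear⟩

theorem finite_filtration : Finite (M.filtration Γ).W := by
  refine Set.Finite.to_subtype ((Γ.finite_toSet.powerset.powerset).subset ?_)
  rintro _ ⟨u, rfl⟩ _ ⟨v, _, rfl⟩ ψ hψ
  exact hψ.1

theorem filtration_sq_of_sq {w v : M.W} (hwv : M.sq w v) :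
    (M.filtration Γ).sq (M.toFiltration Γ w) (M.toFiltration Γ v) :=
  .single ⟨w, v, hwv, rfl, rfl⟩

theorem filtration_sq_induction {P : (M.filtration Γ).W → Prop}
    (hstep : ∀ w v, M.sq w v → P (M.toFiltration Γ w) → P (M.toFiltration Γ v))
    {C D : (M.filtration Γ).W} (hCD : (M.filtration Γ).sq C D) : P C → P D := by
  induction hCD with
  | refl => exact id
  | tail _ hstep' ih =>
    obtain ⟨w, v, hwv, rfl, rfl⟩ := hstep'
    exact hstep w v hwv ∘ ih

theorem mem_sInter_toFiltration_iff (hM : M.IsBiInt) {ψ : Fml} (hψ : ψ ∈ Γ) (u : M.W) :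
    ψ ∈ ⋂₀ (M.toFiltration Γ u).1 ↔ M.Sat ψ u := by
  rw [sInter_toFiltration hM]
  exact and_iff_right hψ

theorem sat_box_of_filtration_sq (hM : M.IsBiInt) (hback : M.BackUp) {ψ : Fml}
    (hψ : .box ψ ∈ Γ) {w v : M.W}
    (hwv : (M.filtration Γ).sq (M.toFiltration Γ w) (M.toFiltration Γ v))
    (hw : M.Sat (.box ψ) w) : M.Sat (.box ψ) v := by
  simp only [← mem_sInter_toFiltration_iff hM hψ] at hw ⊢
  refine filtration_sq_induction (P := fun C => .box ψ ∈ ⋂₀ C.1) (fun w v hwv => ?_) hwv hw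
  simp only [mem_sInter_toFiltration_iff hM hψ]
  exact sat_box_of_sq hM hback hwv

theorem sat_dia_of_filtration_sq (hM : M.IsBiInt) (hforth : M.ForthUp) {ψ : Fml}
    (hψ : .dia ψ ∈ Γ) {w v : M.W}
    (hwv : (M.filtration Γ).sq (M.toFiltration Γ w) (M.toFiltration Γ v))
    (hv : M.Sat (.dia ψ) v) : M.Sat (.dia ψ) w := by
  contrapose hv
  simp only [← mem_sInter_toFiltration_iff hM hψ] at hv ⊢
  refine filtration_sq_induction (P := fun C => .dia ψ ∉ ⋂₀ C.1) (fun w v hwv => ?_) hwv hv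
  simp only [mem_sInter_toFiltration_iff hM hψ]
  exact mt (sat_dia_of_sq hM hforth hwv)

theorem sat_dia_toFiltration_iff (hM : M.IsBiInt) (hlin : M.UpLinear) (hforth : M.ForthUp)
    {ψ : Fml} (hψ : .dia ψ ∈ Γ)
    (ih : ∀ v, (M.filtration Γ).Sat ψ (M.toFiltration Γ v) ↔ M.Sat ψ v) (u : M.W) :
    (M.filtration Γ).Sat (.dia ψ) (M.toFiltration Γ u) ↔ M.Sat (.dia ψ) u := by
  constructor
  · intro h v huv
    obtain ⟨E, hvE, hE⟩ := h _ ((le_toFiltration_iff hM hlin).2 ⟨v, huv, rfl⟩)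
    obtain ⟨y, rfl⟩ := toFiltration_surjective E
    have hy : M.Sat (.dia ψ) y := hM.sat_dia_of_sat ((ih y).1 hE)
    exact sat_dia_of_filtration_sq hM hforth hψ hvE hy v (hM.le_refl v)
  · intro h D huD
    obtain ⟨v, huv, rfl⟩ := (le_toFiltration_iff hM hlin).1 huD
    obtain ⟨y, hvy, hy⟩ := h v huv
    exact ⟨_, filtration_sq_of_sq hvy, (ih y).2 hy⟩

theorem sat_box_toFiltration_iff (hM : M.IsBiInt) (hlin : M.UpLinear) (hback : M.BackUp)
    {ψ : Fml} (hψ : .box ψ ∈ Γ)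
    (ih : ∀ v, (M.filtration Γ).Sat ψ (M.toFiltration Γ v) ↔ M.Sat ψ v) (u : M.W) :
    (M.filtration Γ).Sat (.box ψ) (M.toFiltration Γ u) ↔ M.Sat (.box ψ) u := by
  constructor
  · intro h v y huv hvy
    exact (ih y).1 (h _ _ ((le_toFiltration_iff hM hlin).2 ⟨v, huv, rfl⟩) (filtration_sq_of_sq hvy))
  · intro h D E huD hDE
    obtain ⟨v, huv, rfl⟩ := (le_toFiltration_iff hM hlin).1 huD
    obtain ⟨y, rfl⟩ := toFiltration_surjective E
    have hy := sat_box_of_filtration_sq hM hback hψ hDE (hM.sat_mono _ huv h)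
    exact (ih y).2 (hM.sat_of_sat_box hy)

theorem sat_toFiltration_iff (hM : M.IsGS4) {ψ : Fml} (hψ : ψ.subformulas ⊆ Γ) (u : M.W) :
    (M.filtration Γ).Sat ψ (M.toFiltration Γ u) ↔ M.Sat ψ u := by
  have hbi := hM.isBiInt
  induction ψ generalizing u with
  | var p => exact mem_sInter_toFiltration_iff hbi (hψ (Fml.mem_subformulas_self _)) u
  | bot =>
    have hfallible : M.fallible = ∅ := hM.infallible
    exact iff_of_false (Set.notMem_empty _) (by simp [Sat, hfallible])
  | and a b iha ihb =>
    simp only [Fml.subformulas, Finset.insert_subset_iff, Finset.union_subset_iff] at hψ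
    simp only [Sat, iha hψ.2.1, ihb hψ.2.2]
  | or a b iha ihb =>
    simp only [Fml.subformulas, Finset.insert_subset_iff, Finset.union_subset_iff] at hψ
    simp only [Sat, iha hψ.2.1, ihb hψ.2.2]
  | imp a b iha ihb =>
    simp only [Fml.subformulas, Finset.insert_subset_iff, Finset.union_subset_iff] at hψ
    simp only [Sat, le_toFiltration_iff hbi hM.upLinear, forall_exists_index, and_imp,
      forall_apply_eq_imp_iff₂, iha hψ.2.1, ihb hψ.2.2]
  | dia a ih =>
    simp only [Fml.subformulas, Finset.insert_subset_iff] at hψ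
    exact sat_dia_toFiltration_iff hbi hM.upLinear hM.forthUp hψ.1 (ih hψ.2) u
  | box a ih =>
    simp only [Fml.subformulas, Finset.insert_subset_iff] at hψ
    exact sat_box_toFiltration_iff hbi hM.upLinear hM.backUp hψ.1 (ih hψ.2) u

theorem IsGS4.exists_finite_sat_iff (hM : M.IsGS4) (φ : Fml) (w : M.W) :
    ∃ (N : KModel.{0}) (v : N.W), N.IsGS4 ∧ Finite N.W ∧ v ∉ N.fallible ∧
      (N.Sat φ v ↔ M.Sat φ w) :=
  ⟨M.filtration φ.subformulas, M.toFiltration _ w, isGS4_filtration hM, finite_filtration,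
    Set.notMem_empty _, sat_toFiltration_iff hM subset_rfl w⟩

end Filtration

end KModel

/-- **The finite birelational frame property for GS4.** If an `L`-formula `φ` is
falsifiable (respectively, satisfiable) on some GS4 frame, then `φ` is falsifiable
(respectively, satisfiable) on some GS4 frame whose set of worlds is finite. -/
theorem gs4_finite_frame_property (φ : Fml) :
    ((∃ (M : KModel.{u}) (w : M.W), M.IsGS4 ∧ w ∉ M.fallible ∧ ¬ M.Sat φ w) →
      ∃ (N : KModel.{0}) (v : N.W), N.IsGS4 ∧ Finite N.W ∧ v ∉ N.fallible ∧ ¬ N.Sat φ v) ∧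
    ((∃ (M : KModel.{u}) (w : M.W), M.IsGS4 ∧ w ∉ M.fallible ∧ M.Sat φ w) →
      ∃ (N : KModel.{0}) (v : N.W), N.IsGS4 ∧ Finite N.W ∧ v ∉ N.fallible ∧ N.Sat φ v) := by
  constructor
  · rintro ⟨M, w, hM, -, hφ⟩
    obtain ⟨N, v, hN, hfin, hv, hiff⟩ := hM.exists_finite_sat_iff φ w
    exact ⟨N, v, hN, hfin, hv, mt hiff.1 hφ⟩
  · rintro ⟨M, w, hM, -, hφ⟩
    obtain ⟨N, v, hN, hfin, hv, hiff⟩ := hM.exists_finite_sat_iff φ w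
    exact ⟨N, v, hN, hfin, hv, hiff.2 hφ⟩
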